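/- arXiv:1201.0461 — 8 statements merged into one kernel-verified Lean document; each statement's English description precedes it below -/
import Mathlib

section
/- Let N be a finite set of n players, x : N → EuclideanSpace ℝ (Fin 2), f : ℝ → ℝ, w(i,j) = f(dist(x i, x j)), and ν(S) = (1/2) Σ_{i∈S} Σ_{j∈S, j≠i} w(i,j). Then for every player i ∈ N, the Shapley value Σ_{S⊆N, i∈S} ((|S|−1)!·(n−|S|)!/n!) · (ν(S) − ν(S∖{i})) equals (1/2) Σ_{S⊆N, i∈S, |S|=2} ν(S), i.e., half the sum of the values of all two-element coalitions containing i. -/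
/-!
Since `ν` sums `w` over ordered pairs inside a coalition, the marginal contribution of `i` to a
coalition `S ∋ i` is `∑ j ∈ S \ {i}, ν {i, j}`. Exchanging the two sums in the Shapley value, the
coefficient of `ν {i, j}` becomes the total Shapley weight of the coalitions containing both `i`
and `j`, which a direct factorial computation shows to be `1 / 2`.
-/

open Finset Nat

section OffDiagSum

variable {N M : Type*} [DecidableEq N] [AddCommMonoid M]

def offDiagSum (w : N → N → M) (S : Finset N) : M :=
  ∑ a ∈ S, ∑ b ∈ S.filter (· ≠ a), w a b

lemma offDiagSum_singleton (w : N → N → M) (a : N) : offDiagSum w {a} = 0 := by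
  simp [offDiagSum, filter_singleton]

lemma offDiagSum_insert (w : N → N → M) {i : N} {T : Finset N} (hi : i ∉ T) :
    offDiagSum w (insert i T) = offDiagSum w T + ∑ b ∈ T, (w i b + w b i) := by
  have row_i : (insert i T).filter (· ≠ i) = T := by
    rw [filter_insert, if_neg (not_not.2 rfl)]
    exact filter_true_of_mem fun b hb => ne_of_mem_of_not_mem hb hi
  have row_a : ∀ a ∈ T, ∑ b ∈ (insert i T).filter (· ≠ a), w a b
      = w a i + ∑ b ∈ T.filter (· ≠ a), w a b := fun a ha => by
    rw [filter_insert, if_pos (ne_of_mem_of_not_mem ha hi).symm,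
      sum_insert fun h => hi (mem_filter.1 h).1]
  rw [offDiagSum, sum_insert hi, row_i, sum_congr rfl row_a, sum_add_distrib, offDiagSum,
    sum_add_distrib]
  abel

lemma offDiagSum_pair (w : N → N → M) {i j : N} (h : i ≠ j) :
    offDiagSum w {i, j} = w i j + w j i := by
  rw [offDiagSum_insert w (notMem_singleton.2 h), offDiagSum_singleton, sum_singleton, zero_add]

lemma sub_erase_eq_sum_pair (w : N → N → ℝ) (ν : Finset N → ℝ)
    (hν : ∀ S, ν S = 1 / 2 * offDiagSum w S) {i : N} {S : Finset N} (hi : i ∈ S) :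
    ν S - ν (S.erase i) = ∑ j ∈ S.erase i, ν {i, j} := by
  have hpair : ∀ j ∈ S.erase i, ν {i, j} = 1 / 2 * (w i j + w j i) := fun j hj => by
    rw [hν, offDiagSum_pair w (ne_of_mem_erase hj).symm]
  rw [sum_congr rfl hpair, ← mul_sum, hν, hν, ← insert_erase hi,
    erase_insert (notMem_erase i S), offDiagSum_insert w (notMem_erase i S)]
  ring

end OffDiagSum

lemma sum_range_choose_mul_factorial_succ (m : ℕ) :
    (∑ k ∈ range (m + 1), m.choose k * ((k + 1)! * (m - k)!)) * 2 = (m + 2)! := by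
  have hterm : ∀ k ∈ range (m + 1), m.choose k * ((k + 1)! * (m - k)!) = (k + 1) * m ! :=
    fun k hk => by
      rw [← choose_mul_factorial_mul_factorial (Nat.lt_succ_iff.1 (mem_range.1 hk)),
        factorial_succ]
      ring
  have gauss : (∑ k ∈ range (m + 1), (k + 1)) * 2 = (m + 2) * (m + 1) := by
    simpa [sum_range_succ'] using sum_range_id_mul_two (m + 2)
  rw [sum_congr rfl hterm, ← sum_mul, mul_right_comm, gauss, factorial_succ, factorial_succ]
  ring

lemma sum_Icc_finset_eq_sum_powerset_sdiff {N M : Type*} [DecidableEq N] [AddCommMonoid M]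
    {A s : Finset N} (h : A ⊆ s) (F : Finset N → M) :
    ∑ S ∈ Icc A s, F S = ∑ T ∈ (s \ A).powerset, F (A ∪ T) := by
  refine (Icc_eq_image_powerset h).symm ▸ sum_image fun T hT T' hT' hTT' => ?_
  rw [← union_sdiff_cancel_left (disjoint_of_subset_right (mem_powerset.1 hT) disjoint_sdiff),
    ← union_sdiff_cancel_left (disjoint_of_subset_right (mem_powerset.1 hT') disjoint_sdiff)]
  exact congrArg (· \ A) hTT'

noncomputable def shapleyWeight (n s : ℕ) : ℝ := (s - 1)! * (n - s)! / n !

/-- This is the probability that `j` precedes `i` in a uniformly random ordering of `s`. -/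
lemma sum_shapleyWeight_filter_mem_mem {N : Type*} [DecidableEq N] {s : Finset N} {i j : N}
    (hi : i ∈ s) (hj : j ∈ s) (hij : i ≠ j) :
    ∑ S ∈ s.powerset.filter (fun S => i ∈ S ∧ j ∈ S),
      shapleyWeight s.card S.card = 1 / 2 := by
  have hsub : {i, j} ⊆ s := insert_subset hi (singleton_subset_iff.2 hj)
  have hfilter : s.powerset.filter (fun S => i ∈ S ∧ j ∈ S) = Icc {i, j} s := by
    rw [Icc_eq_filter_powerset]; simp only [insert_subset_iff, singleton_subset_iff]
  have hcard : ∀ T ∈ (s \ {i, j}).powerset, ({i, j} ∪ T).card = T.card + 2 := fun T hT => by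
    rw [card_union_of_disjoint (disjoint_of_subset_right (mem_powerset.1 hT) disjoint_sdiff),
      card_pair hij, add_comm]
  set m := (s \ {i, j}).card with hm_def
  have hm : s.card = m + 2 := by
    have hle := card_le_card hsub
    rw [card_pair hij] at hle
    rw [hm_def, card_sdiff_of_subset hsub, card_pair hij]
    omega
  rw [hfilter, sum_Icc_finset_eq_sum_powerset_sdiff hsub, sum_congr rfl fun T hT => by
    rw [hcard T hT], sum_powerset_apply_card (fun k => shapleyWeight s.card (k + 2)), hm]
  have key := congrArg (Nat.cast : ℕ → ℝ) (sum_range_choose_mul_factorial_succ m)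
  push_cast at key
  simp only [shapleyWeight, nsmul_eq_mul, ← mul_div_assoc, ← sum_div,
    show ∀ k, k + 2 - 1 = k + 1 from fun k => rfl,
    show ∀ k, m + 2 - (k + 2) = m - k from fun k => by omega]
  rw [div_eq_iff (by positivity)]
  linarith

lemma sum_mul_sum_erase_comm {N R : Type*} [DecidableEq N] [NonUnitalNonAssocSemiring R]
    (s : Finset N) (i : N) (c : Finset N → R) (g : N → R) :
    ∑ S ∈ s.powerset.filter (fun S => i ∈ S), c S * ∑ j ∈ S.erase i, g j
      = ∑ j ∈ s.erase i, (∑ S ∈ s.powerset.filter (fun S => i ∈ S ∧ j ∈ S), c S) * g j := by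
  simp_rw [mul_sum, sum_mul]
  exact sum_comm' fun S j => by simp only [mem_filter, mem_powerset, mem_erase]; grind

lemma filter_mem_card_eq_two {N : Type*} [DecidableEq N] {s : Finset N} {i : N} (hi : i ∈ s) :
    s.powerset.filter (fun S => i ∈ S ∧ S.card = 2)
      = (s.erase i).image (fun j => {i, j}) := by
  ext S
  simp only [mem_filter, mem_powerset, mem_image, mem_erase]
  constructor
  · rintro ⟨hS, hiS, hcard⟩
    obtain ⟨a, b, hab, rfl⟩ := card_eq_two.1 hcard
    rcases mem_insert.1 hiS with rfl | h
    · exact ⟨b, ⟨hab.symm, hS (mem_insert_of_mem (mem_singleton_self b))⟩, rfl⟩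
    · rw [mem_singleton.1 h]
      exact ⟨a, ⟨hab, hS (mem_insert_self a _)⟩, pair_comm b a⟩
  · rintro ⟨j, ⟨hji, hj⟩, rfl⟩
    exact ⟨insert_subset hi (singleton_subset_iff.2 hj), mem_insert_self i _, card_pair hji.symm⟩

lemma sum_filter_mem_card_eq_two {N M : Type*} [DecidableEq N] [AddCommMonoid M]
    {s : Finset N} {i : N} (hi : i ∈ s) (F : Finset N → M) :
    ∑ S ∈ s.powerset.filter (fun S => i ∈ S ∧ S.card = 2), F S
      = ∑ j ∈ s.erase i, F {i, j} := by
  rw [filter_mem_card_eq_two hi, sum_image]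
  intro j hj k hk hjk
  have := congrArg (erase · i) hjk
  rwa [erase_insert (notMem_singleton.2 (ne_of_mem_erase (mem_coe.1 hj)).symm),
    erase_insert (notMem_singleton.2 (ne_of_mem_erase (mem_coe.1 hk)).symm), singleton_inj] at this

theorem clustering_game_shapley_value_pair_form_general
    {N : Type*} [Fintype N] [DecidableEq N]
    (w : N → N → ℝ)
    (ν : Finset N → ℝ)
    (hν : ∀ S : Finset N,
      ν S = (1/2) * ∑ i ∈ S, ∑ j ∈ S.filter (· ≠ i), w i j) :
    ∀ i : N,
      ∑ S ∈ Finset.univ.powerset.filter (fun S : Finset N => i ∈ S),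
        ((Nat.factorial (S.card - 1) * Nat.factorial (Fintype.card N - S.card) : ℝ)
          / (Nat.factorial (Fintype.card N) : ℝ)) * (ν S - ν (S.erase i))
      = (1/2) * ∑ S ∈ Finset.univ.powerset.filter
          (fun S : Finset N => i ∈ S ∧ S.card = 2), ν S := by
  intro i
  calc _ = ∑ S ∈ univ.powerset.filter (fun S => i ∈ S),
        shapleyWeight (Fintype.card N) S.card * ∑ j ∈ S.erase i, ν {i, j} :=
        sum_congr rfl fun S hS => by
          rw [sub_erase_eq_sum_pair w ν hν (mem_filter.1 hS).2, shapleyWeight]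
    _ = ∑ j ∈ univ.erase i, 1 / 2 * ν {i, j} := by
      rw [sum_mul_sum_erase_comm, ← Finset.card_univ]
      exact sum_congr rfl fun j hj => by
        rw [sum_shapleyWeight_filter_mem_mem (mem_univ i) (mem_univ j) (ne_of_mem_erase hj).symm]
    _ = _ := by rw [← mul_sum, sum_filter_mem_card_eq_two (mem_univ i)]

theorem clustering_game_shapley_value_pair_form
    {N : Type*} [Fintype N] [DecidableEq N]
    (x : N → EuclideanSpace ℝ (Fin 2)) (f : ℝ → ℝ)
    (w : N → N → ℝ) (hw : ∀ i j, w i j = f (dist (x i) (x j)))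
    (ν : Finset N → ℝ)
    (hν : ∀ S : Finset N,
      ν S = (1/2) * ∑ i ∈ S, ∑ j ∈ S.filter (· ≠ i), w i j) :
    ∀ i : N,
      ∑ S ∈ Finset.univ.powerset.filter (fun S : Finset N => i ∈ S),
        ((Nat.factorial (S.card - 1) * Nat.factorial (Fintype.card N - S.card) : ℝ)
          / (Nat.factorial (Fintype.card N) : ℝ)) * (ν S - ν (S.erase i))
      = (1/2) * ∑ S ∈ Finset.univ.powerset.filter
          (fun S : Finset N => i ∈ S ∧ S.card = 2), ν S :=
  clustering_game_shapley_value_pair_form_general w ν hν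
end

section
/- Let N be a finite set of players, x : N → EuclideanSpace ℝ (Fin 2), f : ℝ → ℝ, w(i,j) = f(dist(x i, x j)), ν(S) = (1/2) Σ_{i∈S} Σ_{j∈S, j≠i} w(i,j), and φ_i = (1/2) Σ_{j∈N, j≠i} w(i,j). Then for every coalition S ⊆ N, the excess of S at φ equals the excess of its complement at φ: ν(S) − Σ_{i∈S} φ_i = ν(N∖S) − Σ_{i∈N∖S} φ_i. -/
/-!
The excess of a coalition `T` at the Shapley value is minus half the weight of the cut
between `T` and `Tᶜ`; since `w` is symmetric, so is the cut.
-/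

open Finset

namespace Finset

variable {N M : Type*} [Fintype N] [DecidableEq N]

theorem sum_filter_ne_univ_eq_add_sum_compl [AddCommMonoid M] (g : N → M) {T : Finset N}
    {i : N} (hi : i ∈ T) :
    ∑ j ∈ univ.filter (· ≠ i), g j = ∑ j ∈ T.filter (· ≠ i), g j + ∑ j ∈ Tᶜ, g j := by
  have hcompl : Tᶜ.filter (· ≠ i) = Tᶜ :=
    filter_true_of_mem fun j hj hji => mem_compl.mp hj (hji ▸ hi)
  rw [← hcompl, sum_filter, sum_filter, sum_filter, sum_add_sum_compl]

theorem sum_sum_filter_ne_sub_sum_sum_univ [AddCommGroup M] (w : N → N → M) (T : Finset N) :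
    ∑ i ∈ T, ∑ j ∈ T.filter (· ≠ i), w i j - ∑ i ∈ T, ∑ j ∈ univ.filter (· ≠ i), w i j
      = -∑ i ∈ T, ∑ j ∈ Tᶜ, w i j := by
  rw [← sum_sub_distrib, ← sum_neg_distrib]
  refine sum_congr rfl fun i hi => ?_
  rw [sum_filter_ne_univ_eq_add_sum_compl _ hi]
  abel

theorem sum_sum_compl_comm [AddCommMonoid M] {w : N → N → M} (hw : ∀ i j, w i j = w j i)
    (S : Finset N) : ∑ i ∈ S, ∑ j ∈ Sᶜ, w i j = ∑ i ∈ Sᶜ, ∑ j ∈ S, w i j := by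
  rw [sum_comm]
  exact sum_congr rfl fun i _ => sum_congr rfl fun j _ => hw j i

end Finset

theorem clustering_game_excess_complement
    {N : Type*} [Fintype N] [DecidableEq N]
    (x : N → EuclideanSpace ℝ (Fin 2)) (f : ℝ → ℝ)
    (w : N → N → ℝ) (hw : ∀ i j, w i j = f (dist (x i) (x j)))
    (ν : Finset N → ℝ)
    (hν : ∀ S : Finset N,
      ν S = (1/2) * ∑ i ∈ S, ∑ j ∈ S.filter (· ≠ i), w i j)
    (φ : N → ℝ)
    (hφ : ∀ i : N, φ i = (1/2) * ∑ j ∈ Finset.univ.filter (· ≠ i), w i j) :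
    ∀ S : Finset N,
      ν S - ∑ i ∈ S, φ i = ν Sᶜ - ∑ i ∈ Sᶜ, φ i := by
  have excess_eq_cut (T : Finset N) :
      ν T - ∑ i ∈ T, φ i = -(1/2) * ∑ i ∈ T, ∑ j ∈ Tᶜ, w i j := by
    rw [hν, sum_congr rfl fun i _ => hφ i, ← mul_sum, ← mul_sub,
      sum_sum_filter_ne_sub_sum_sum_univ]
    ring
  have w_symm (i j : N) : w i j = w j i := by rw [hw, hw, dist_comm]
  intro S
  rw [excess_eq_cut, excess_eq_cut, compl_compl, sum_sum_compl_comm w_symm]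
end

section
/- Let N be a finite set of players, x : N → EuclideanSpace ℝ (Fin 2), f : ℝ → ℝ with 0 ≤ f(d) ≤ 1 for all d ≥ 0, w(i,j) = f(dist(x i, x j)), ν(S) = (1/2) Σ_{i∈S} Σ_{j∈S, j≠i} w(i,j), and φ_i = (1/2) Σ_{j∈N, j≠i} w(i,j). Then φ lies in the core of the game (N, ν): (1) φ_i ≥ ν({i}) for all i ∈ N; (2) Σ_{i∈N} φ_i = ν(N); (3) Σ_{i∈S} φ_i ≥ ν(S) for every coalition S ⊆ N. -/
open Finset

/- Since every weight is nonnegative, the Shapley value of a player, half its total weight to all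
other players, dominates half its weight to the members of any coalition containing it. Summing over
a coalition gives coalitional rationality; for the grand coalition the two sides coincide. -/

lemma sum_sum_filter_ne_le_sum_sum_univ_filter_ne {ι : Type*} [Fintype ι] [DecidableEq ι]
    {w : ι → ι → ℝ} (hw : ∀ i j, 0 ≤ w i j) (S : Finset ι) :
    ∑ i ∈ S, ∑ j ∈ S.filter (· ≠ i), w i j ≤ ∑ i ∈ S, ∑ j ∈ univ.filter (· ≠ i), w i j :=
  sum_le_sum fun i _ =>
    sum_le_sum_of_subset_of_nonneg (filter_subset_filter _ (subset_univ S)) fun j _ _ => hw i j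

theorem clustering_game_shapley_in_core
    {N : Type*} [Fintype N] [DecidableEq N]
    (x : N → EuclideanSpace ℝ (Fin 2)) (f : ℝ → ℝ)
    (hf : ∀ d : ℝ, 0 ≤ d → 0 ≤ f d ∧ f d ≤ 1)
    (w : N → N → ℝ) (hw : ∀ i j, w i j = f (dist (x i) (x j)))
    (ν : Finset N → ℝ)
    (hν : ∀ S : Finset N,
      ν S = (1/2) * ∑ i ∈ S, ∑ j ∈ S.filter (· ≠ i), w i j)
    (φ : N → ℝ)
    (hφ : ∀ i : N, φ i = (1/2) * ∑ j ∈ Finset.univ.filter (· ≠ i), w i j) :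
    (∀ i : N, φ i ≥ ν {i}) ∧
    (∑ i : N, φ i = ν Finset.univ) ∧
    (∀ S : Finset N, ∑ i ∈ S, φ i ≥ ν S) := by
  have hw_nonneg (i j : N) : 0 ≤ w i j := hw i j ▸ (hf _ dist_nonneg).1
  have sum_φ (S : Finset N) :
      ∑ i ∈ S, φ i = (1/2) * ∑ i ∈ S, ∑ j ∈ univ.filter (· ≠ i), w i j := by
    simp only [hφ, mul_sum]
  have coalitional (S : Finset N) : ∑ i ∈ S, φ i ≥ ν S := by
    rw [hν, sum_φ]
    exact mul_le_mul_of_nonneg_left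
      (sum_sum_filter_ne_le_sum_sum_univ_filter_ne hw_nonneg S) (by norm_num)
  refine ⟨fun i => by simpa using coalitional {i}, ?_, coalitional⟩
  rw [hν, sum_φ]
end

section
/- Let N be a finite set of players, x : N → EuclideanSpace ℝ (Fin 2), f : ℝ → ℝ, w(i,j) = f(dist(x i, x j)), ν(S) = (1/2) Σ_{i∈S} Σ_{j∈S, j≠i} w(i,j), and φ_i = (1/2) Σ_{j∈N, j≠i} w(i,j). Then for every efficient allocation y : N → ℝ (i.e., Σ_{i∈N} y_i = ν(N)) and every coalition S ⊆ N, max(e_S(y), e_{N∖S}(y)) ≥ e_S(φ), where e_S(y) = ν(S) − Σ_{i∈S} y_i is the excess of S at y. -/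
/-!
Write `cut S` for the total weight of the edges leaving `S`. Summing the Shapley values over `S`
counts every edge inside `S` once and every edge leaving `S` half, so the excess of `S` at the
Shapley value is `-cut S / 2`. Since `w` is symmetric, `cut S = cut Sᶜ`, so `S` and `Sᶜ` have the
same excess at the Shapley value. For an efficient allocation the sum of the excesses of `S` and
`Sᶜ` is `ν S + ν Sᶜ - ν N`, independent of the allocation, and the Shapley value is efficient.
Hence for every efficient `y` the two excesses at `y` have the same sum as at the Shapley value,
and the larger of them is at least their common value there.
-/

open Finset

namespace ClusteringGame

variable {N : Type*} [Fintype N] [DecidableEq N]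

section Excess

variable (ν : Finset N → ℝ) (y : N → ℝ)

def excess (S : Finset N) : ℝ := ν S - ∑ i ∈ S, y i

theorem excess_add_excess_compl (S : Finset N) :
    excess ν y S + excess ν y Sᶜ = ν S + ν Sᶜ - ∑ i, y i := by
  rw [excess, excess, ← sum_add_sum_compl S y]
  ring

theorem excess_le_max_excess_of_efficient {φ : N → ℝ} (hφ : ∑ i, φ i = ν univ)
    (hy : ∑ i, y i = ν univ) {S : Finset N} (hS : excess ν φ S = excess ν φ Sᶜ) :
    excess ν φ S ≤ max (excess ν y S) (excess ν y Sᶜ) := by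
  have hsum := excess_add_excess_compl ν y S
  have hsumφ := excess_add_excess_compl ν φ S
  rw [hy] at hsum
  rw [hφ] at hsumφ
  rcases le_total (excess ν y S) (excess ν y Sᶜ) with h | h
  · exact le_max_of_le_right (by linarith)
  · exact le_max_of_le_left (by linarith)

end Excess

section Weighted

variable (w : N → N → ℝ)

noncomputable def value (S : Finset N) : ℝ := (1/2) * ∑ i ∈ S, ∑ j ∈ S.filter (· ≠ i), w i j

noncomputable def shapley (i : N) : ℝ := (1/2) * ∑ j ∈ univ.filter (· ≠ i), w i j

theorem sum_filter_ne_eq_add_sum_compl {S : Finset N} {i : N} (hi : i ∈ S) :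
    ∑ j ∈ univ.filter (· ≠ i), w i j = ∑ j ∈ S.filter (· ≠ i), w i j + ∑ j ∈ Sᶜ, w i j := by
  have hcompl : Sᶜ.filter (· ≠ i) = Sᶜ :=
    filter_true_of_mem fun j hj => by rintro rfl; exact mem_compl.mp hj hi
  rw [← union_compl S, filter_union, hcompl, sum_union (disjoint_compl_right.mono_left (filter_subset _ S))]

theorem excess_shapley (S : Finset N) :
    excess (value w) (shapley w) S = -(1/2) * ∑ i ∈ S, ∑ j ∈ Sᶜ, w i j := by
  simp only [excess, value, shapley, ← mul_sum]
  rw [sum_congr rfl fun i hi => sum_filter_ne_eq_add_sum_compl w hi, sum_add_distrib]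
  ring

theorem sum_shapley : ∑ i, shapley w i = value w univ := by
  have h := excess_shapley w univ
  simp only [excess, compl_univ, sum_empty, sum_const_zero, mul_zero] at h
  linarith

theorem excess_shapley_compl (hw : ∀ i j, w i j = w j i) (S : Finset N) :
    excess (value w) (shapley w) Sᶜ = excess (value w) (shapley w) S := by
  rw [excess_shapley, excess_shapley, compl_compl, sum_comm]
  simp only [hw]

end Weighted

end ClusteringGame

open ClusteringGame in
theorem clustering_game_max_excess_lower_bound
    {N : Type*} [Fintype N] [DecidableEq N]
    (x : N → EuclideanSpace ℝ (Fin 2)) (f : ℝ → ℝ)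
    (w : N → N → ℝ) (hw : ∀ i j, w i j = f (dist (x i) (x j)))
    (ν : Finset N → ℝ)
    (hν : ∀ S : Finset N,
      ν S = (1/2) * ∑ i ∈ S, ∑ j ∈ S.filter (· ≠ i), w i j)
    (φ : N → ℝ)
    (hφ : ∀ i : N, φ i = (1/2) * ∑ j ∈ Finset.univ.filter (· ≠ i), w i j) :
    ∀ y : N → ℝ, (∑ i : N, y i = ν Finset.univ) →
      ∀ S : Finset N,
        max (ν S - ∑ i ∈ S, y i) (ν Sᶜ - ∑ i ∈ Sᶜ, y i)
          ≥ ν S - ∑ i ∈ S, φ i := by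
  intro y hy S
  obtain rfl : ν = value w := funext hν
  obtain rfl : φ = shapley w := funext hφ
  have hsymm : ∀ i j, w i j = w j i := fun i j => by rw [hw, hw, dist_comm]
  exact excess_le_max_excess_of_efficient (value w) y (sum_shapley w) hy
    (excess_shapley_compl w hsymm S).symm
end

section
/- Let N be a finite set of at least two players, x : N → EuclideanSpace ℝ (Fin 2), f : ℝ → ℝ, w(i,j) = f(dist(x i, x j)), ν(S) = (1/2) Σ_{i∈S} Σ_{j∈S, j≠i} w(i,j), and φ_i = (1/2) Σ_{j∈N, j≠i} w(i,j). Then φ minimizes the maximal excess among efficient allocations: for every efficient allocation y : N → ℝ, the maximum over all nonempty proper coalitions S ⊊ N of e_S(y) is at least the maximum over all nonempty proper coalitions S ⊊ N of e_S(φ), where e_S(y) = ν(S) − Σ_{i∈S} y_i. -/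
/-!
Every efficient allocation `y` satisfies `e_S(y) + e_{Sᶜ}(y) = ν(S) + ν(Sᶜ) - ν(N)`, a quantity
independent of `y`, so the larger of `e_S(y)` and `e_{Sᶜ}(y)` is at least its half. For the
Shapley value of a clustering game the excess is `e_S(φ) = -½ Σ_{i ∈ S, j ∉ S} w(i,j)`, which by
symmetry of `w` equals `e_{Sᶜ}(φ)`; hence `e_S(φ)` is exactly that half and is dominated by the
maximal excess of `y`.
-/

open Finset

namespace CooperativeGame

section Excess

variable {N : Type*} [Fintype N]

def excess (ν : Finset N → ℝ) (y : N → ℝ) (S : Finset N) : ℝ :=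
  ν S - ∑ i ∈ S, y i

def properExcesses (ν : Finset N → ℝ) (y : N → ℝ) : Set ℝ :=
  {r | ∃ S : Finset N, S.Nonempty ∧ S ≠ univ ∧ r = excess ν y S}

theorem properExcesses_finite (ν : Finset N → ℝ) (y : N → ℝ) :
    (properExcesses ν y).Finite :=
  (Set.finite_range (excess ν y)).subset <| by
    rintro r ⟨S, -, -, rfl⟩
    exact ⟨S, rfl⟩

theorem properExcesses_nonempty [Nontrivial N] (ν : Finset N → ℝ) (y : N → ℝ) :
    (properExcesses ν y).Nonempty :=
  let i : N := Classical.arbitrary N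
  ⟨_, {i}, singleton_nonempty i, singleton_ne_univ i, rfl⟩

variable [DecidableEq N] {ν : Finset N → ℝ} {y z : N → ℝ}

theorem excess_add_excess_compl (hy : ∑ i, y i = ν univ) (S : Finset N) :
    excess ν y S + excess ν y Sᶜ = ν S + ν Sᶜ - ν univ := by
  have := sum_add_sum_compl S y
  unfold excess
  linarith

theorem sSup_properExcesses_le_of_excess_compl [Nontrivial N] (hy : ∑ i, y i = ν univ)
    (hz : ∑ i, z i = ν univ) (hz_compl : ∀ S, excess ν z Sᶜ = excess ν z S) :
    sSup (properExcesses ν z) ≤ sSup (properExcesses ν y) := by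
  refine csSup_le (properExcesses_nonempty ν z) ?_
  rintro r ⟨S, hS, hS_univ, rfl⟩
  have hSc : Sᶜ.Nonempty := by
    rwa [← compl_ne_univ_iff_nonempty, compl_compl]
  have hSc_univ : Sᶜ ≠ univ := (compl_ne_univ_iff_nonempty S).mpr hS
  have hbdd := (properExcesses_finite ν y).bddAbove
  have hS_le := le_csSup hbdd ⟨S, hS, hS_univ, rfl⟩
  have hSc_le := le_csSup hbdd ⟨Sᶜ, hSc, hSc_univ, rfl⟩
  have hsum_y := excess_add_excess_compl hy S
  have hsum_z := excess_add_excess_compl hz S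
  linarith [hz_compl S]

end Excess

section Pairwise

variable {N : Type*} [Fintype N] [DecidableEq N] (w : N → N → ℝ)

noncomputable def pairwiseGame (S : Finset N) : ℝ :=
  (1/2) * ∑ i ∈ S, ∑ j ∈ S.filter (· ≠ i), w i j

noncomputable def pairwiseShapley (i : N) : ℝ :=
  (1/2) * ∑ j ∈ univ.filter (· ≠ i), w i j

theorem sum_pairwiseShapley : ∑ i, pairwiseShapley w i = pairwiseGame w univ := by
  rw [pairwiseGame, mul_sum]
  rfl

theorem excess_pairwiseShapley (S : Finset N) :
    excess (pairwiseGame w) (pairwiseShapley w) S = -(1/2) * ∑ i ∈ S, ∑ j ∈ Sᶜ, w i j := by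
  rw [excess, pairwiseGame, mul_sum, mul_sum, ← sum_sub_distrib]
  refine sum_congr rfl fun i hi => ?_
  rw [pairwiseShapley, filter_ne', filter_ne', sum_erase_eq_sub hi,
    sum_erase_eq_sub (mem_univ i), ← sum_add_sum_compl S (w i)]
  ring

theorem excess_pairwiseShapley_compl {w : N → N → ℝ} (hw : ∀ i j, w i j = w j i)
    (S : Finset N) :
    excess (pairwiseGame w) (pairwiseShapley w) Sᶜ
      = excess (pairwiseGame w) (pairwiseShapley w) S := by
  rw [excess_pairwiseShapley, excess_pairwiseShapley, compl_compl, sum_comm]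
  simp only [hw]

end Pairwise

end CooperativeGame

open CooperativeGame in
theorem clustering_game_shapley_minimizes_max_excess
    {N : Type*} [Fintype N] [DecidableEq N] (hN : 2 ≤ Fintype.card N)
    (x : N → EuclideanSpace ℝ (Fin 2)) (f : ℝ → ℝ)
    (w : N → N → ℝ) (hw : ∀ i j, w i j = f (dist (x i) (x j)))
    (ν : Finset N → ℝ)
    (hν : ∀ S : Finset N,
      ν S = (1/2) * ∑ i ∈ S, ∑ j ∈ S.filter (· ≠ i), w i j)
    (φ : N → ℝ)
    (hφ : ∀ i : N, φ i = (1/2) * ∑ j ∈ Finset.univ.filter (· ≠ i), w i j) :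
    ∀ y : N → ℝ, (∑ i : N, y i = ν Finset.univ) →
      sSup {r : ℝ | ∃ S : Finset N, S.Nonempty ∧ S ≠ Finset.univ ∧
              r = ν S - ∑ i ∈ S, y i}
        ≥ sSup {r : ℝ | ∃ S : Finset N, S.Nonempty ∧ S ≠ Finset.univ ∧
              r = ν S - ∑ i ∈ S, φ i} := by
  intro y hy
  obtain rfl : ν = pairwiseGame w := funext hν
  obtain rfl : φ = pairwiseShapley w := funext hφ
  have : Nontrivial N := Fintype.one_lt_card_iff_nontrivial.mp hN
  have hw_symm : ∀ i j, w i j = w j i := fun i j => by rw [hw, hw, dist_comm]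
  exact sSup_properExcesses_le_of_excess_compl hy (sum_pairwiseShapley w)
    (excess_pairwiseShapley_compl hw_symm)
end

section
/- Let N be a finite set of players, x : N → EuclideanSpace ℝ (Fin 2), f : ℝ → ℝ, w(i,j) = f(dist(x i, x j)), ν(S) = (1/2) Σ_{i∈S} Σ_{j∈S, j≠i} w(i,j), and φ_i = (1/2) Σ_{j∈N, j≠i} w(i,j). Then for every player i ∈ N, Σ_{j∈N, j≠i} φ_j − ν(N∖{i}) = φ_i − ν({i}); in particular, whenever φ_i > ν({i}), the propensity to disrupt of player i at φ, namely d_i(φ) = (Σ_{j≠i} φ_j − ν(N∖{i})) / (φ_i − ν({i})), equals 1. -/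
/-!
Write `ν(S) = ½ Σ_{a ∈ S} Σ_{b ∈ S, b ≠ a} w(a,b)`. Removing player `i` from `S` deletes the
terms `w(i,b)` and `w(b,i)`, so for symmetric `w` the marginal contribution is
`ν(N) - ν(N ∖ {i}) = Σ_{j ≠ i} w(i,j) = 2 φ_i`. The Shapley values add up to `ν(N)`, so
`Σ_{j ≠ i} φ_j - ν(N ∖ {i}) = ν(N) - φ_i - ν(N ∖ {i}) = φ_i`, while `ν({i}) = 0`.
-/

open Finset

section

variable {N : Type*} [DecidableEq N]

theorem Finset.sum_sum_erase_eq_of_mem {M : Type*} [AddCommMonoid M] (w : N → N → M)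
    {S : Finset N} {i : N} (hi : i ∈ S) :
    ∑ a ∈ S, ∑ b ∈ S.erase a, w a b =
      ∑ a ∈ S.erase i, ∑ b ∈ (S.erase i).erase a, w a b + ∑ b ∈ S.erase i, (w i b + w b i) := by
  have row (a : N) (ha : a ∈ S.erase i) :
      ∑ b ∈ S.erase a, w a b = ∑ b ∈ (S.erase i).erase a, w a b + w a i := by
    rw [erase_right_comm, sum_erase_add _ _ (mem_erase.2 ⟨(ne_of_mem_erase ha).symm, hi⟩)]
  rw [← add_sum_erase _ _ hi, sum_congr rfl row, sum_add_distrib, sum_add_distrib]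
  abel

noncomputable def coalitionValue (w : N → N → ℝ) (S : Finset N) : ℝ :=
  (1 / 2) * ∑ a ∈ S, ∑ b ∈ S.erase a, w a b

noncomputable def shapleyValue [Fintype N] (w : N → N → ℝ) (i : N) : ℝ :=
  (1 / 2) * ∑ j ∈ univ.erase i, w i j

variable (w : N → N → ℝ)

theorem coalitionValue_singleton (i : N) : coalitionValue w {i} = 0 := by
  simp [coalitionValue]

theorem coalitionValue_sub_coalitionValue_erase (hw : ∀ a b, w a b = w b a) {S : Finset N}
    {i : N} (hi : i ∈ S) :
    coalitionValue w S - coalitionValue w (S.erase i) = ∑ b ∈ S.erase i, w i b := by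
  simp only [coalitionValue, sum_sum_erase_eq_of_mem w hi, ← hw i, sum_add_distrib]
  ring

variable [Fintype N]

theorem sum_shapleyValue : ∑ i, shapleyValue w i = coalitionValue w univ := by
  simp only [shapleyValue, coalitionValue, mul_sum]

theorem coalitionValue_univ_sub_coalitionValue_erase (hw : ∀ a b, w a b = w b a) (i : N) :
    coalitionValue w univ - coalitionValue w (univ.erase i) = 2 * shapleyValue w i := by
  rw [coalitionValue_sub_coalitionValue_erase w hw (mem_univ i), shapleyValue]
  ring

theorem sum_erase_shapleyValue_sub_coalitionValue_erase (hw : ∀ a b, w a b = w b a) (i : N) :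
    ∑ j ∈ univ.erase i, shapleyValue w j - coalitionValue w (univ.erase i) = shapleyValue w i := by
  have efficiency := sum_shapleyValue w
  have marginal := coalitionValue_univ_sub_coalitionValue_erase w hw i
  rw [← add_sum_erase _ _ (mem_univ i)] at efficiency
  linarith

end

theorem clustering_game_propensity_to_disrupt
    {N : Type*} [Fintype N] [DecidableEq N]
    (x : N → EuclideanSpace ℝ (Fin 2)) (f : ℝ → ℝ)
    (w : N → N → ℝ) (hw : ∀ i j, w i j = f (dist (x i) (x j)))
    (ν : Finset N → ℝ)
    (hν : ∀ S : Finset N,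
      ν S = (1/2) * ∑ i ∈ S, ∑ j ∈ S.filter (· ≠ i), w i j)
    (φ : N → ℝ)
    (hφ : ∀ i : N, φ i = (1/2) * ∑ j ∈ Finset.univ.filter (· ≠ i), w i j) :
    ∀ i : N,
      ((∑ j ∈ Finset.univ.filter (· ≠ i), φ j) - ν (Finset.univ.erase i)
        = φ i - ν {i}) ∧
      (φ i > ν {i} →
        ((∑ j ∈ Finset.univ.filter (· ≠ i), φ j) - ν (Finset.univ.erase i))
          / (φ i - ν {i}) = 1) := by
  simp only [filter_ne'] at hν hφ ⊢
  obtain rfl : ν = coalitionValue w := funext hν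
  obtain rfl : φ = shapleyValue w := funext hφ
  have hsymm (a b : N) : w a b = w b a := by rw [hw, hw, dist_comm]
  intro i
  rw [coalitionValue_singleton, sub_zero, sum_erase_shapleyValue_sub_coalitionValue_erase w hsymm]
  exact ⟨rfl, fun hpos => div_self hpos.ne'⟩
end

section
/- Let N be a finite set of players, x : N → EuclideanSpace ℝ (Fin 2), f : ℝ → ℝ, w(i,j) = f(dist(x i, x j)), ν(S) = (1/2) Σ_{i∈S} Σ_{j∈S, j≠i} w(i,j), and φ_i = (1/2) Σ_{j∈N, j≠i} w(i,j). If ν(N) ≠ 0, then the Shapley value coincides with the Gately point: for every i ∈ N, φ_i = ((ν(N) − ν(N∖{i})) / Σ_{j∈N} (ν(N) − ν(N∖{j}))) · ν(N). -/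
/-!
Since `w` is symmetric, removing player `i` from the grand coalition loses every pair `{i, j}`,
i.e. `ν N - ν (N ∖ {i}) = Σ_{j ≠ i} w i j = 2 φ_i`. The marginal contributions are thus
proportional to the Shapley value, which is efficient (`Σ φ_i = ν N`), and normalising them to
total `ν N`, as the Gately point does, gives back `φ`.
-/

open Finset

section PairSums

variable {ι : Type*} [DecidableEq ι]

theorem sum_sum_erase_eq_add_add_sum_sum_erase {R : Type*} [AddCommMonoid R] (w : ι → ι → R) {S : Finset ι} {i : ι}
    (hi : i ∈ S) :
    ∑ a ∈ S, ∑ b ∈ S.erase a, w a b =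
      ∑ b ∈ S.erase i, w i b + ∑ a ∈ S.erase i, w a i +
        ∑ a ∈ S.erase i, ∑ b ∈ (S.erase i).erase a, w a b := by
  have hsplit : ∀ a ∈ S.erase i,
      ∑ b ∈ S.erase a, w a b = w a i + ∑ b ∈ (S.erase i).erase a, w a b := fun a ha => by
    rw [erase_right_comm, add_sum_erase _ _ (mem_erase.mpr ⟨(ne_of_mem_erase ha).symm, hi⟩)]
  rw [← add_sum_erase _ _ hi, sum_congr rfl hsplit, sum_add_distrib, add_assoc]

theorem sum_sum_erase_eq_two_mul_add {R : Type*} [CommRing R] {w : ι → ι → R}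
    (hw : ∀ a b, w a b = w b a) {S : Finset ι} {i : ι} (hi : i ∈ S) :
    ∑ a ∈ S, ∑ b ∈ S.erase a, w a b =
      2 * ∑ b ∈ S.erase i, w i b + ∑ a ∈ S.erase i, ∑ b ∈ (S.erase i).erase a, w a b := by
  rw [sum_sum_erase_eq_add_add_sum_sum_erase w hi, sum_congr rfl fun a _ => hw a i]
  ring

end PairSums

theorem eq_div_sum_mul_of_eq_mul {ι K : Type*} [Fintype ι] [Field K] {φ m : ι → K} {c V : K}
    (hc : c ≠ 0) (hV : V ≠ 0) (hm : ∀ i, m i = c * φ i) (hφ : ∑ i, φ i = V) (i : ι) :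
    φ i = (m i / ∑ j, m j) * V := by
  simp only [hm, ← mul_sum, hφ]
  field_simp

theorem clustering_game_shapley_eq_gately
    {N : Type*} [Fintype N] [DecidableEq N]
    (x : N → EuclideanSpace ℝ (Fin 2)) (f : ℝ → ℝ)
    (w : N → N → ℝ) (hw : ∀ i j, w i j = f (dist (x i) (x j)))
    (ν : Finset N → ℝ)
    (hν : ∀ S : Finset N,
      ν S = (1/2) * ∑ i ∈ S, ∑ j ∈ S.filter (· ≠ i), w i j)
    (φ : N → ℝ)
    (hφ : ∀ i : N, φ i = (1/2) * ∑ j ∈ Finset.univ.filter (· ≠ i), w i j)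
    (hgrand : ν Finset.univ ≠ 0) :
    ∀ i : N,
      φ i = ((ν Finset.univ - ν (Finset.univ.erase i))
        / ∑ j : N, (ν Finset.univ - ν (Finset.univ.erase j)))
          * ν Finset.univ := by
  have hsymm : ∀ a b, w a b = w b a := fun a b => by rw [hw, hw, dist_comm]
  simp only [filter_ne'] at hν hφ
  have hmarginal : ∀ i, ν univ - ν (univ.erase i) = 2 * φ i := fun i => by
    rw [hν, hν, hφ, sum_sum_erase_eq_two_mul_add hsymm (mem_univ i)]
    ring
  have hefficient : ∑ i, φ i = ν univ := by
    simp only [hφ, hν, ← mul_sum]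
  exact eq_div_sum_mul_of_eq_mul two_ne_zero hgrand hmarginal hefficient
end

section
/- Let N be a finite set of players, x : N → EuclideanSpace ℝ (Fin 2), f : ℝ → ℝ, w(i,j) = f(dist(x i, x j)), ν(S) = (1/2) Σ_{i∈S} Σ_{j∈S, j≠i} w(i,j), and φ_i = (1/2) Σ_{j∈N, j≠i} w(i,j). Suppose ν(N) ≠ 0 and λ ∈ ℝ satisfies the efficiency condition Σ_{i∈N} (λ·(ν(N) − ν(N∖{i})) + (1−λ)·ν({i})) = ν(N). Then λ = 1/2, and the τ-value coincides with the Shapley value: for every i ∈ N, λ·(ν(N) − ν(N∖{i})) + (1−λ)·ν({i}) = φ_i. -/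
/-!
With symmetric weights, removing player `i` from the grand coalition loses exactly the pairs
containing `i`, so `M_i = ∑_{j ≠ i} w(i,j) = 2 φ_i`, while every singleton is worth `0`.
Summing, `∑ M_i = 2 ν(N)`, so efficiency forces `λ = 1/2` (as `ν(N) ≠ 0`), and then
`τ_i = M_i / 2 = φ_i`.
-/

open Finset

section PairWeight

variable {N R : Type*} [DecidableEq N]

def pairWeight [AddCommMonoid R] (w : N → N → R) (S : Finset N) : R :=
  ∑ i ∈ S, ∑ j ∈ S.erase i, w i j

@[simp]
lemma pairWeight_singleton [AddCommMonoid R] (w : N → N → R) (i : N) :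
    pairWeight w {i} = 0 := by
  simp [pairWeight]

lemma pairWeight_eq_erase_add [AddCommMonoid R] (w : N → N → R) {S : Finset N} {i : N}
    (hi : i ∈ S) :
    pairWeight w S = pairWeight w (S.erase i) + ∑ j ∈ S.erase i, (w i j + w j i) := by
  have split_off_i : ∀ k ∈ S.erase i,
      ∑ j ∈ S.erase k, w k j = w k i + ∑ j ∈ (S.erase i).erase k, w k j := by
    intro k hk
    rw [erase_right_comm, add_sum_erase _ _ (mem_erase.2 ⟨(ne_of_mem_erase hk).symm, hi⟩)]
  calc pairWeight w S
      = ∑ j ∈ S.erase i, w i j + ∑ k ∈ S.erase i, ∑ j ∈ S.erase k, w k j :=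
        (add_sum_erase _ _ hi).symm
    _ = ∑ j ∈ S.erase i, w i j + ∑ k ∈ S.erase i, w k i + pairWeight w (S.erase i) := by
        rw [sum_congr rfl split_off_i, sum_add_distrib, add_assoc, pairWeight]
    _ = pairWeight w (S.erase i) + ∑ j ∈ S.erase i, (w i j + w j i) := by
        rw [sum_add_distrib, add_comm]

variable [CommRing R] {w : N → N → R}

lemma pairWeight_sub_erase_of_symm (hw : ∀ i j, w i j = w j i) {S : Finset N} {i : N}
    (hi : i ∈ S) :
    pairWeight w S - pairWeight w (S.erase i) = 2 * ∑ j ∈ S.erase i, w i j := by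
  rw [pairWeight_eq_erase_add w hi, mul_sum]
  simp only [← hw, two_mul, add_sub_cancel_left]

lemma sum_pairWeight_sub_erase_of_symm [Fintype N] (hw : ∀ i j, w i j = w j i) :
    ∑ i, (pairWeight w univ - pairWeight w (univ.erase i)) = 2 * pairWeight w univ := by
  rw [sum_congr rfl fun i _ => pairWeight_sub_erase_of_symm hw (mem_univ i), ← mul_sum]
  rfl

end PairWeight

theorem clustering_game_shapley_eq_tau
    {N : Type*} [Fintype N] [DecidableEq N]
    (x : N → EuclideanSpace ℝ (Fin 2)) (f : ℝ → ℝ)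
    (w : N → N → ℝ) (hw : ∀ i j, w i j = f (dist (x i) (x j)))
    (ν : Finset N → ℝ)
    (hν : ∀ S : Finset N,
      ν S = (1/2) * ∑ i ∈ S, ∑ j ∈ S.filter (· ≠ i), w i j)
    (φ : N → ℝ)
    (hφ : ∀ i : N, φ i = (1/2) * ∑ j ∈ Finset.univ.filter (· ≠ i), w i j)
    (hgrand : ν Finset.univ ≠ 0)
    (lam : ℝ)
    (hlam : ∑ i : N, (lam * (ν Finset.univ - ν (Finset.univ.erase i))
      + (1 - lam) * ν {i}) = ν Finset.univ) :
    lam = 1/2 ∧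
    ∀ i : N,
      lam * (ν Finset.univ - ν (Finset.univ.erase i))
        + (1 - lam) * ν {i} = φ i := by
  have hsymm : ∀ i j, w i j = w j i := fun i j => by rw [hw, hw, dist_comm]
  have hν_eq : ∀ S, ν S = 1/2 * pairWeight w S := by simp [hν, pairWeight, filter_ne']
  have hmarginal : ∀ i, ν univ - ν (univ.erase i) = 2 * φ i := by
    intro i
    rw [hν_eq, hν_eq, ← mul_sub, pairWeight_sub_erase_of_symm hsymm (mem_univ i), hφ,
      filter_ne']
    ring
  have hmarginal_sum : ∑ i, (ν univ - ν (univ.erase i)) = 2 * ν univ := by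
    simp only [hν_eq, ← mul_sub, ← mul_sum, sum_pairWeight_sub_erase_of_symm hsymm]
    ring
  have hlam_eq : lam * (2 * ν univ) = ν univ := by
    simpa [hν_eq {_}, ← mul_sum, hmarginal_sum] using hlam
  have hhalf : lam = 1/2 := by
    apply mul_right_cancel₀ hgrand
    linarith
  refine ⟨hhalf, fun i => ?_⟩
  rw [hhalf, hmarginal, hν_eq {i}, pairWeight_singleton]
  ring
end
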